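/- Fix ξ ∈ ℝ and c > 0. Define φ : ℝ → ℝ by φ(u) = (1+u)³(1−u)³ for |u| ≤ 1 and φ(u) = 0 for |u| > 1, and define φ̄ : ℝ → ℝ by φ̄(x) = φ((x−ξ)/c)·(x−ξ)·|x−ξ|. Then: (a) φ̄ is differentiable on ℝ, and φ̄(x) = φ̄′(x) = 0 for all x with |x−ξ| ≥ c; moreover φ̄ is twice differentiable at every x with |x−ξ| > c with second derivative 0 there; (b) φ̄(ξ) = φ̄′(ξ) = 0, the left derivative of φ̄′ at ξ equals −2, and the right derivative of φ̄′ at ξ equals 2; (c) φ̄′(x) ∈ [−6c, 6c] for all x ∈ ℝ; (d) φ̄ is Lipschitz, φ̄′ is Lipschitz on ℝ, and the second derivative φ̄″ — which exists at every x ≠ ξ — is Lipschitz on each of the intervals (−∞, ξ) and (ξ, ∞). -/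

import Mathlib

/-!
With `u = (x - ξ) / c` we have `φ̄(x) = c² ψ(u)` for `ψ(u) = φ(u) u |u|` (`unitBump`), and
`φ = m³` for `m(v) = max (1 - v²) 0` (`bumpBase`). Since `max t 0 ^ n` is `C¹` for `n ≥ 2`, the
chain rule gives `ψ' = q ∘ |·|`, where `q(v) = 2 m³ v - 6 m² v³` (`unitBumpSlope`) is
differentiable everywhere with `q' = r = 2 m³ - 30 m² v² + 24 m v⁴` (`unitBumpCurv`). The corner
of `|·|` at `0` turns `r(0) = 2` into the one-sided second derivatives `±2`. On `[-1, 1]` both `q`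
and `r` are polynomials, and they vanish outside, so each is a polynomial composed with the clamp
to `[-1, 1]`, hence Lipschitz.
-/

/-- The basic bump `φ(u) = (1+u)³(1-u)³` on `[-1,1]`, zero outside. -/
noncomputable def phi (u : ℝ) : ℝ := if |u| ≤ 1 then (1 + u) ^ 3 * (1 - u) ^ 3 else 0

/-- The localized bump `φ̄(x) = φ((x-ξ)/c)·(x-ξ)·|x-ξ|`. -/
noncomputable def phibar (ξ c x : ℝ) : ℝ := phi ((x - ξ) / c) * (x - ξ) * |x - ξ|

open Set Filter Topology Asymptotics

theorem hasDerivAt_max_zero_pow {n : ℕ} (hn : 1 < n) (x : ℝ) :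
    HasDerivAt (fun y : ℝ => max y 0 ^ n) (n * max x 0 ^ (n - 1)) x := by
  rcases lt_trichotomy x 0 with hx | rfl | hx
  · have hzero : (fun y : ℝ => max y 0 ^ n) =ᶠ[𝓝 x] fun _ => 0 := by
      filter_upwards [Iio_mem_nhds hx] with y hy
      rw [max_eq_right (le_of_lt (mem_Iio.1 hy)), zero_pow (by omega : n ≠ 0)]
    simpa [max_eq_right hx.le, zero_pow (by omega : n - 1 ≠ 0)] using
      (hasDerivAt_const x (0 : ℝ)).congr_of_eventuallyEq hzero
  · rw [hasDerivAt_iff_isLittleO_nhds_zero]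
    simp only [zero_add, max_self, zero_pow (by omega : n ≠ 0), zero_pow (by omega : n - 1 ≠ 0),
      mul_zero, smul_zero, sub_zero]
    refine (IsBigO.of_bound 1 (Eventually.of_forall fun y => ?_)).trans_isLittleO
      (isLittleO_pow_id hn)
    rw [one_mul, norm_pow, norm_pow]
    refine pow_le_pow_left₀ (norm_nonneg _) ?_ n
    rw [Real.norm_eq_abs, Real.norm_eq_abs, abs_of_nonneg (le_max_right y 0)]
    exact max_le (le_abs_self y) (abs_nonneg y)
  · have hpow : (fun y : ℝ => max y 0 ^ n) =ᶠ[𝓝 x] fun y => y ^ n := by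
      filter_upwards [Ioi_mem_nhds hx] with y hy
      rw [max_eq_left hy.le]
    simpa [max_eq_left hx.le] using (hasDerivAt_pow n x).congr_of_eventuallyEq hpow

theorem hasDerivAt_mul_abs (x : ℝ) : HasDerivAt (fun y : ℝ => y * |y|) (2 * |x|) x := by
  have hsplit : (fun y : ℝ => y * |y|) = fun y => max y 0 ^ 2 - max (-y) 0 ^ 2 := by
    ext y
    rw [← max_zero_add_max_neg_zero_eq_abs_self y]
    nth_rw 1 [← max_zero_sub_max_neg_zero_eq_self y]
    ring
  rw [hsplit]
  refine ((hasDerivAt_max_zero_pow one_lt_two x).sub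
    ((hasDerivAt_max_zero_pow one_lt_two (-x)).comp x (hasDerivAt_neg x))).congr_deriv ?_
  norm_num
  rw [← max_zero_add_max_neg_zero_eq_abs_self x]
  ring

theorem exists_lipschitzWith_of_eqOn_Icc {f P : ℝ → ℝ} {a b : ℝ} (hab : a ≤ b)
    (hP : ContDiff ℝ 1 P) (hin : EqOn f P (Icc a b)) (hout : ∀ x, x ≤ a ∨ b ≤ x → f x = 0) :
    ∃ K, LipschitzWith K f := by
  obtain ⟨K, hK⟩ := hP.contDiffOn.exists_lipschitzOnWith one_ne_zero (convex_Icc a b)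
    isCompact_Icc
  have hclamp : LipschitzWith 1 fun x : ℝ => max a (min x b) :=
    (LipschitzWith.id.min_const b).const_max a
  -- `P a = P b = 0`, so `f` is `P` composed with the clamp to `[a, b]`
  have hf : f = fun x => P (max a (min x b)) := by
    ext x
    rcases lt_or_ge x a with hx | hx
    · rw [hout x (Or.inl hx.le), max_eq_left (min_le_of_left_le hx.le),
        ← hin ⟨le_rfl, hab⟩, hout a (Or.inl le_rfl)]
    rcases le_or_gt x b with hx' | hx'
    · rw [min_eq_left hx', max_eq_right hx, hin ⟨hx, hx'⟩]
    · rw [hout x (Or.inr hx'.le), min_eq_right hx'.le, max_eq_right hab,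
        ← hin ⟨hab, le_rfl⟩, hout b (Or.inr le_rfl)]
  refine ⟨K * 1, hf ▸ lipschitzOnWith_univ.1 (hK.comp hclamp.lipschitzOnWith fun x _ => ?_)⟩
  exact ⟨le_max_left _ _, max_le hab (min_le_right _ _)⟩

theorem LipschitzOnWith.congr_eqOn {α β : Type*} [PseudoEMetricSpace α] [PseudoEMetricSpace β]
    {K : NNReal} {f g : α → β} {s : Set α} (hf : LipschitzOnWith K f s) (h : EqOn f g s) :
    LipschitzOnWith K g s := fun x hx y hy => by
  simpa only [h hx, h hy] using hf hx hy

theorem LipschitzWith.comp_rescale {f : ℝ → ℝ} {K : NNReal} (hf : LipschitzWith K f) (ξ c : ℝ) :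
    LipschitzWith (K * ‖c⁻¹‖₊) fun x => f ((x - ξ) / c) := by
  refine hf.comp (LipschitzWith.of_dist_le_mul fun x y => ?_)
  simp only [Real.dist_eq, coe_nnnorm, Real.norm_eq_abs, div_eq_mul_inv, ← sub_mul, abs_mul]
  rw [sub_sub_sub_cancel_right, mul_comm]

theorem HasDerivWithinAt.const_mul_comp_rescale {f : ℝ → ℝ} {f' a ξ c x : ℝ} {s t : Set ℝ}
    (hf : HasDerivWithinAt f f' t ((x - ξ) / c)) (hst : MapsTo (fun y => (y - ξ) / c) s t) :
    HasDerivWithinAt (fun y => a * f ((y - ξ) / c)) (a * f' / c) s x := by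
  have hu := (((hasDerivAt_id x).sub_const ξ).div_const c).hasDerivWithinAt (s := s)
  simpa [Function.comp_def, div_eq_mul_inv, mul_assoc] using (hf.comp x hu hst).const_mul a

theorem HasDerivAt.const_mul_comp_rescale {f : ℝ → ℝ} {f' a ξ c x : ℝ}
    (hf : HasDerivAt f f' ((x - ξ) / c)) :
    HasDerivAt (fun y => a * f ((y - ξ) / c)) (a * f' / c) x :=
  hasDerivWithinAt_univ.1 (hf.hasDerivWithinAt.const_mul_comp_rescale (mapsTo_univ _ _))

noncomputable def bumpBase (v : ℝ) : ℝ := max (1 - v ^ 2) 0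

noncomputable def unitBump (v : ℝ) : ℝ := phi v * v * |v|

noncomputable def unitBumpSlope (v : ℝ) : ℝ :=
  2 * bumpBase v ^ 3 * v - 6 * bumpBase v ^ 2 * v ^ 3

noncomputable def unitBumpCurv (v : ℝ) : ℝ :=
  2 * bumpBase v ^ 3 - 30 * bumpBase v ^ 2 * v ^ 2 + 24 * bumpBase v * v ^ 4

theorem bumpBase_of_abs_le {v : ℝ} (hv : |v| ≤ 1) : bumpBase v = 1 - v ^ 2 :=
  max_eq_left (sub_nonneg.2 (sq_le_one_iff_abs_le_one v |>.2 hv))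

theorem bumpBase_of_one_le_abs {v : ℝ} (hv : 1 ≤ |v|) : bumpBase v = 0 :=
  max_eq_right (sub_nonpos.2 (one_le_sq_iff_one_le_abs v |>.2 hv))

theorem bumpBase_abs (v : ℝ) : bumpBase |v| = bumpBase v := by
  rw [bumpBase, bumpBase, sq_abs]

theorem phi_eq_bumpBase_pow (v : ℝ) : phi v = bumpBase v ^ 3 := by
  rw [phi]
  split_ifs with hv
  · rw [bumpBase_of_abs_le hv]
    ring
  · rw [bumpBase_of_one_le_abs (not_le.1 hv).le]
    ring

theorem hasDerivAt_bumpBase_pow {n : ℕ} (hn : 1 < n) (x : ℝ) :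
    HasDerivAt (fun v => bumpBase v ^ n) (n * bumpBase x ^ (n - 1) * (-2 * x)) x := by
  have hsq : HasDerivAt (fun v : ℝ => 1 - v ^ 2) (-2 * x) x := by
    simpa using (hasDerivAt_pow 2 x).const_sub 1
  exact (hasDerivAt_max_zero_pow hn _).comp x hsq

theorem hasDerivAt_unitBump (x : ℝ) : HasDerivAt unitBump (unitBumpSlope |x|) x := by
  have hprod := (hasDerivAt_bumpBase_pow (by norm_num : 1 < 3) x).mul (hasDerivAt_mul_abs x)
  have hfun : unitBump = fun v => bumpBase v ^ 3 * (v * |v|) := by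
    ext v
    rw [unitBump, phi_eq_bumpBase_pow]
    ring
  rw [hfun]
  refine hprod.congr_deriv ?_
  rw [unitBumpSlope, bumpBase_abs, pow_succ |x| 2, sq_abs]
  push_cast
  ring

theorem hasDerivAt_unitBumpSlope (x : ℝ) : HasDerivAt unitBumpSlope (unitBumpCurv x) x := by
  have hcube :=
    ((hasDerivAt_bumpBase_pow (by norm_num : 1 < 3) x).mul (hasDerivAt_id x)).const_mul 2
  have hsq := ((hasDerivAt_bumpBase_pow one_lt_two x).mul (hasDerivAt_pow 3 x)).const_mul 6
  refine ((hcube.sub hsq).congr_of_eventuallyEq (.of_forall fun v => ?_)).congr_deriv ?_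
  · simp only [unitBumpSlope, Pi.mul_apply, Pi.sub_apply, id]
    ring
  · simp only [unitBumpCurv, id]
    push_cast
    ring

theorem unitBumpCurv_zero : unitBumpCurv 0 = 2 := by
  norm_num [unitBumpCurv, bumpBase]

theorem unitBumpSlope_of_one_le_abs {v : ℝ} (hv : 1 ≤ |v|) : unitBumpSlope v = 0 := by
  rw [unitBumpSlope, bumpBase_of_one_le_abs hv]
  ring

theorem unitBumpCurv_of_one_le_abs {v : ℝ} (hv : 1 ≤ |v|) : unitBumpCurv v = 0 := by
  rw [unitBumpCurv, bumpBase_of_one_le_abs hv]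
  ring

theorem abs_unitBumpSlope_le (v : ℝ) : |unitBumpSlope v| ≤ 6 := by
  rcases le_or_gt |v| 1 with hv | hv
  · have hv2 : v ^ 2 ≤ 1 := (sq_le_one_iff_abs_le_one v).2 hv
    have hfac : unitBumpSlope v = 2 * v * (1 - v ^ 2) ^ 2 * (1 - 4 * v ^ 2) := by
      rw [unitBumpSlope, bumpBase_of_abs_le hv]
      ring
    have h₁ : |2 * v| ≤ 2 := by rw [abs_mul, abs_two]; linarith
    have h₂ : |(1 - v ^ 2) ^ 2| ≤ 1 := by
      rw [abs_pow, abs_of_nonneg (by linarith)]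
      exact pow_le_one₀ (by linarith) (by linarith [sq_nonneg v])
    have h₃ : |1 - 4 * v ^ 2| ≤ 3 := abs_le.2 ⟨by linarith, by linarith [sq_nonneg v]⟩
    calc |unitBumpSlope v| = |2 * v| * |(1 - v ^ 2) ^ 2| * |1 - 4 * v ^ 2| := by
          rw [hfac, abs_mul, abs_mul]
      _ ≤ 2 * 1 * 3 := by gcongr
      _ = 6 := by norm_num
  · rw [unitBumpSlope_of_one_le_abs hv.le, abs_zero]
    norm_num

theorem exists_lipschitzWith_unitBumpSlope : ∃ K, LipschitzWith K unitBumpSlope := by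
  refine exists_lipschitzWith_of_eqOn_Icc (by norm_num)
    (P := fun v => 2 * v - 12 * v ^ 3 + 18 * v ^ 5 - 8 * v ^ 7) (by fun_prop) (fun v hv => ?_)
    fun v hv => unitBumpSlope_of_one_le_abs (le_abs'.2 hv)
  rw [unitBumpSlope, bumpBase_of_abs_le (abs_le.2 hv)]
  ring

theorem exists_lipschitzWith_unitBumpCurv : ∃ K, LipschitzWith K unitBumpCurv := by
  refine exists_lipschitzWith_of_eqOn_Icc (by norm_num)
    (P := fun v => 2 - 36 * v ^ 2 + 90 * v ^ 4 - 56 * v ^ 6) (by fun_prop) (fun v hv => ?_)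
    fun v hv => unitBumpCurv_of_one_le_abs (le_abs'.2 hv)
  rw [unitBumpCurv, bumpBase_of_abs_le (abs_le.2 hv)]
  ring

theorem hasDerivAt_unitBumpSlope_abs {x : ℝ} (hx : x ≠ 0) :
    HasDerivAt (fun v => unitBumpSlope |v|) (unitBumpCurv |x| * SignType.sign x) x :=
  (hasDerivAt_unitBumpSlope |x|).comp x (hasDerivAt_abs hx)

theorem hasDerivWithinAt_unitBumpSlope_abs_Ioi :
    HasDerivWithinAt (fun v => unitBumpSlope |v|) 2 (Ioi 0) 0 := by
  have habs : HasDerivWithinAt (|·|) 1 (Ioi (0 : ℝ)) 0 :=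
    (hasDerivWithinAt_id 0 _).congr (fun y hy => abs_of_pos hy) abs_zero
  have h := (hasDerivAt_unitBumpSlope |0|).comp_hasDerivWithinAt 0 habs
  rwa [abs_zero, unitBumpCurv_zero, mul_one] at h

theorem hasDerivWithinAt_unitBumpSlope_abs_Iio :
    HasDerivWithinAt (fun v => unitBumpSlope |v|) (-2) (Iio 0) 0 := by
  have habs : HasDerivWithinAt (|·|) (-1) (Iio (0 : ℝ)) 0 :=
    (hasDerivAt_neg 0).hasDerivWithinAt.congr (fun y hy => abs_of_neg hy) (by simp)
  have h := (hasDerivAt_unitBumpSlope |0|).comp_hasDerivWithinAt 0 habs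
  rwa [abs_zero, unitBumpCurv_zero, mul_neg_one] at h

section phibar

variable {ξ c : ℝ}

theorem one_le_abs_div_of_le (hc : 0 < c) {x : ℝ} (hx : c ≤ |x - ξ|) : 1 ≤ |(x - ξ) / c| := by
  rwa [abs_div, abs_of_pos hc, one_le_div hc]

theorem phibar_eq_rescale (hc : 0 < c) :
    phibar ξ c = fun x => c ^ 2 * unitBump ((x - ξ) / c) := by
  ext x
  rw [phibar, unitBump, abs_div, abs_of_pos hc]
  field_simp

theorem phibar_of_le_abs (hc : 0 < c) {x : ℝ} (hx : c ≤ |x - ξ|) : phibar ξ c x = 0 := by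
  rw [phibar, phi_eq_bumpBase_pow, bumpBase_of_one_le_abs (one_le_abs_div_of_le hc hx)]
  ring

theorem hasDerivAt_phibar (hc : 0 < c) (x : ℝ) :
    HasDerivAt (phibar ξ c) (c * unitBumpSlope |(x - ξ) / c|) x := by
  rw [phibar_eq_rescale hc]
  refine ((hasDerivAt_unitBump _).const_mul_comp_rescale (a := c ^ 2)).congr_deriv ?_
  field_simp

theorem deriv_phibar (hc : 0 < c) :
    deriv (phibar ξ c) = fun x => c * unitBumpSlope |(x - ξ) / c| :=
  funext fun x => (hasDerivAt_phibar hc x).deriv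

theorem deriv_phibar_of_le_abs (hc : 0 < c) {x : ℝ} (hx : c ≤ |x - ξ|) :
    deriv (phibar ξ c) x = 0 := by
  rw [(hasDerivAt_phibar hc x).deriv,
    unitBumpSlope_of_one_le_abs (by rw [abs_abs]; exact one_le_abs_div_of_le hc hx), mul_zero]

theorem abs_deriv_phibar_le (hc : 0 < c) (x : ℝ) : |deriv (phibar ξ c) x| ≤ 6 * c := by
  rw [deriv_phibar hc, abs_mul, abs_of_pos hc, mul_comm]
  exact mul_le_mul_of_nonneg_right (abs_unitBumpSlope_le _) hc.le

theorem lipschitzWith_phibar (hc : 0 < c) : LipschitzWith (6 * c).toNNReal (phibar ξ c) :=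
  lipschitzWith_of_nnnorm_deriv_le (fun x => (hasDerivAt_phibar hc x).differentiableAt) fun x => by
    rw [Real.le_toNNReal_iff_coe_le (by positivity), coe_nnnorm, Real.norm_eq_abs]
    exact abs_deriv_phibar_le hc x

theorem exists_lipschitzWith_deriv_phibar (hc : 0 < c) :
    ∃ K, LipschitzWith K (deriv (phibar ξ c)) := by
  obtain ⟨K, hK⟩ := exists_lipschitzWith_unitBumpSlope
  rw [deriv_phibar hc]
  exact ⟨_, (lipschitzWith_smul c).comp ((hK.comp lipschitzWith_one_norm).comp_rescale ξ c)⟩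

theorem hasDerivAt_deriv_phibar (hc : 0 < c) {x : ℝ} (hx : x ≠ ξ) :
    HasDerivAt (deriv (phibar ξ c))
      (unitBumpCurv |(x - ξ) / c| * SignType.sign ((x - ξ) / c)) x := by
  rw [deriv_phibar hc]
  refine ((hasDerivAt_unitBumpSlope_abs ?_).const_mul_comp_rescale (a := c)).congr_deriv ?_
  · exact div_ne_zero (sub_ne_zero.2 hx) hc.ne'
  · field_simp

theorem hasDerivAt_deriv_phibar_of_lt_abs (hc : 0 < c) {x : ℝ} (hx : c < |x - ξ|) :
    HasDerivAt (deriv (phibar ξ c)) 0 x := by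
  have hne : x ≠ ξ := fun h => by simp [h] at hx; linarith
  simpa [unitBumpCurv_of_one_le_abs (by rw [abs_abs]; exact one_le_abs_div_of_le hc hx.le)] using
    hasDerivAt_deriv_phibar hc hne

theorem hasDerivWithinAt_deriv_phibar_Ioi (hc : 0 < c) :
    HasDerivWithinAt (deriv (phibar ξ c)) 2 (Ioi ξ) ξ := by
  have h : HasDerivWithinAt (fun y => c * unitBumpSlope |(y - ξ) / c|) (c * 2 / c) (Ioi ξ) ξ :=
    HasDerivWithinAt.const_mul_comp_rescale (ξ := ξ) (c := c) (x := ξ) (t := Ioi 0)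
      (by rw [sub_self, zero_div]; exact hasDerivWithinAt_unitBumpSlope_abs_Ioi)
      fun y hy => div_pos (sub_pos.2 hy) hc
  rwa [mul_div_cancel_left₀ _ hc.ne', ← deriv_phibar hc] at h

theorem hasDerivWithinAt_deriv_phibar_Iio (hc : 0 < c) :
    HasDerivWithinAt (deriv (phibar ξ c)) (-2) (Iio ξ) ξ := by
  have h : HasDerivWithinAt (fun y => c * unitBumpSlope |(y - ξ) / c|) (c * -2 / c) (Iio ξ) ξ :=
    HasDerivWithinAt.const_mul_comp_rescale (ξ := ξ) (c := c) (x := ξ) (t := Iio 0)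
      (by rw [sub_self, zero_div]; exact hasDerivWithinAt_unitBumpSlope_abs_Iio)
      fun y hy => div_neg_of_neg_of_pos (sub_neg.2 hy) hc
  rwa [mul_div_cancel_left₀ _ hc.ne', ← deriv_phibar hc] at h

theorem exists_lipschitzOnWith_deriv_deriv_phibar (hc : 0 < c) :
    ∃ K, LipschitzOnWith K (deriv (deriv (phibar ξ c))) (Iio ξ) ∧
      LipschitzOnWith K (deriv (deriv (phibar ξ c))) (Ioi ξ) := by
  obtain ⟨K, hK⟩ := exists_lipschitzWith_unitBumpCurv
  have hcurv := (hK.comp lipschitzWith_one_norm).comp_rescale ξ c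
  refine ⟨_, hcurv.neg.lipschitzOnWith.congr_eqOn fun y hy => ?_,
    hcurv.lipschitzOnWith.congr_eqOn fun y hy => ?_⟩
  · rw [(hasDerivAt_deriv_phibar hc (ne_of_lt hy)).deriv,
      sign_neg (div_neg_of_neg_of_pos (sub_neg.2 hy) hc)]
    simp only [SignType.coe_neg_one, mul_neg_one, Pi.neg_apply, Function.comp_apply,
      Real.norm_eq_abs]
  · rw [(hasDerivAt_deriv_phibar hc (ne_of_gt hy)).deriv, sign_pos (div_pos (sub_pos.2 hy) hc)]
    simp only [SignType.coe_one, mul_one, Function.comp_apply, Real.norm_eq_abs]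

end phibar

theorem stmt_6 (ξ c : ℝ) (hc : 0 < c) :
    (Differentiable ℝ (phibar ξ c) ∧
      (∀ x : ℝ, c ≤ |x - ξ| → phibar ξ c x = 0 ∧ deriv (phibar ξ c) x = 0) ∧
      (∀ x : ℝ, c < |x - ξ| → HasDerivAt (deriv (phibar ξ c)) 0 x)) ∧
    (phibar ξ c ξ = 0 ∧ deriv (phibar ξ c) ξ = 0 ∧
      HasDerivWithinAt (deriv (phibar ξ c)) (-2) (Set.Iio ξ) ξ ∧
      HasDerivWithinAt (deriv (phibar ξ c)) 2 (Set.Ioi ξ) ξ) ∧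
    (∀ x : ℝ, deriv (phibar ξ c) x ∈ Set.Icc (-(6 * c)) (6 * c)) ∧
    ((∃ K : NNReal, LipschitzWith K (phibar ξ c)) ∧
      (∃ K : NNReal, LipschitzWith K (deriv (phibar ξ c))) ∧
      (∀ x : ℝ, x ≠ ξ → DifferentiableAt ℝ (deriv (phibar ξ c)) x) ∧
      (∃ K : NNReal, LipschitzOnWith K (deriv (deriv (phibar ξ c))) (Set.Iio ξ) ∧
        LipschitzOnWith K (deriv (deriv (phibar ξ c))) (Set.Ioi ξ))) :=
  ⟨⟨fun x => (hasDerivAt_phibar hc x).differentiableAt,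
      fun _ hx => ⟨phibar_of_le_abs hc hx, deriv_phibar_of_le_abs hc hx⟩,
      fun _ hx => hasDerivAt_deriv_phibar_of_lt_abs hc hx⟩,
    ⟨by simp [phibar], by simp [deriv_phibar hc, unitBumpSlope],
      hasDerivWithinAt_deriv_phibar_Iio hc, hasDerivWithinAt_deriv_phibar_Ioi hc⟩,
    fun x => abs_le.1 (abs_deriv_phibar_le hc x),
    ⟨⟨_, lipschitzWith_phibar hc⟩, exists_lipschitzWith_deriv_phibar hc,
      fun _ hx => (hasDerivAt_deriv_phibar hc hx).differentiableAt,
      exists_lipschitzOnWith_deriv_deriv_phibar hc⟩⟩
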